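/- arXiv:1508.06777 — 2 statements merged into one kernel-verified Lean document; each statement's English description precedes it below -/
import Mathlib

section
/- For the scalar control system ẋ = 2u − x with running cost f₀(t,x,u) = 2u + |u| − x and control set P = [−1/2, 1/2], the value function V^inf(t,b) := inf_{u ∈ 𝕌} liminf_{T→∞} J(t,b;u,T) satisfies V^inf(0,b) = −b for every b ∈ ℝ; moreover, for every b ∈ ℝ and u ∈ 𝕌, if lim_{T→∞} J(0,b;u,T) exists in ℝ, then u ∈ L¹([0,∞)) and x_{b,0,u}(T) → 0 as T → ∞, and in that case b + lim_{T→∞} J(0,b;u,T) = ‖u‖_{L¹([0,∞))} ≥ 0. -/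
open Filter Topology MeasureTheory Metric Set Bornology
open scoped RealInnerProductSpace Classical

noncomputable section

/-- The set 𝕌 of admissible controls: Lebesgue measurable functions `ℝ → P`
bounded on every compact time interval. -/
def Adm (P : Type*) [MetricSpace P] [MeasurableSpace P] : Set (ℝ → P) :=
  {u | Measurable u ∧ ∀ T : ℝ, IsBounded (u '' Set.Icc 0 T)}

variable {P : Type*} [MetricSpace P] [MeasurableSpace P] [BorelSpace P]
  [CompleteSpace P] [TopologicalSpace.SeparableSpace P] [Nonempty P]
variable {F : Type*} [NormedAddCommGroup F] [NormedSpace ℝ F] [CompleteSpace F]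

/-- `traj b t u` is the (Carathéodory) solution of `ẋ(s) = f(s, x(s), u(s))`, `x(t) = b`. -/
def IsTraj (f : ℝ → F → P → F) (traj : F → ℝ → (ℝ → P) → ℝ → F) : Prop :=
  ∀ b : F, ∀ t : ℝ, ∀ u ∈ Adm P, ∀ s : ℝ,
    traj b t u s = b + ∫ r in t..s, f r (traj b t u r) (u r)

/-- Standing regularity assumptions of the paper: `f, f₀` continuous, locally
Lipschitz in `x`, and `f` of sublinear growth. -/
def StandardSystem (f : ℝ → F → P → F) (f₀ : ℝ → F → P → ℝ) : Prop :=
  Continuous (fun q : ℝ × F × P => f q.1 q.2.1 q.2.2) ∧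
  Continuous (fun q : ℝ × F × P => f₀ q.1 q.2.1 q.2.2) ∧
  (∀ t u, LocallyLipschitz fun x => f t x u) ∧
  (∀ t u, LocallyLipschitz fun x => f₀ t x u) ∧
  ∃ C : ℝ, ∀ t x u, ‖f t x u‖ ≤ C * (1 + ‖x‖)

/-- `J(θ, y; u, T)`. -/
def ctrlCost (f₀ : ℝ → F → P → ℝ) (traj : F → ℝ → (ℝ → P) → ℝ → F)
    (θ : ℝ) (y : F) (u : ℝ → P) (T : ℝ) : ℝ :=
  ∫ s in θ..T, f₀ s (traj y θ u s) (u s)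

/-- A real-valued function `V` enjoys the Dynamic Programming Principle. -/
def EnjoysDPP (f₀ : ℝ → F → P → ℝ) (traj : F → ℝ → (ℝ → P) → ℝ → F)
    (V : ℝ → F → ℝ) : Prop :=
  ∀ b : F, ∀ t τ : ℝ, 0 ≤ t → t ≤ τ →
    V t b = sInf {r : ℝ | ∃ u ∈ Adm P,
      r = ctrlCost f₀ traj t b u τ + V τ (traj b t u τ)}

/-- An extended-real-valued function `V` enjoys the Dynamic Programming Principle. -/
def EnjoysDPPE (f₀ : ℝ → F → P → ℝ) (traj : F → ℝ → (ℝ → P) → ℝ → F)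
    (V : ℝ → F → EReal) : Prop :=
  ∀ b : F, ∀ t τ : ℝ, 0 ≤ t → t ≤ τ →
    V t b = sInf {e : EReal | ∃ u ∈ Adm P,
      e = (ctrlCost f₀ traj t b u τ : ℝ) + V τ (traj b t u τ)}

/-- Concatenation `u' ⋄_T u''` of two controls at time `T`. -/
def concatCtrl (u' u'' : ℝ → P) (T : ℝ) : ℝ → P :=
  fun t => if t < T then u' t else u'' t

/-- A multi-valued map `Ω : ℝ^m × [0,∞) ⇉ 𝕌` induces asymptotic constraints. -/
def InducesAC (traj : F → ℝ → (ℝ → P) → ℝ → F)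
    (Ω : F → ℝ → Set (ℝ → P)) : Prop :=
  (∀ b t, Ω b t ⊆ Adm P) ∧
  ∀ (b : F) (t : ℝ), 0 ≤ t → ∀ T > t,
    Ω b t = {w | ∃ u ∈ Adm P, ∃ u₁ ∈ Ω (traj b t u T) T, w = concatCtrl u u₁ T}

/-- The value function `V^⋄` associated with asymptotic constraints `Ω`. -/
def Vdia (f₀ : ℝ → F → P → ℝ) (traj : F → ℝ → (ℝ → P) → ℝ → F)
    (Ω : F → ℝ → Set (ℝ → P)) (t : ℝ) (b : F) : EReal :=
  sInf {e : EReal | ∃ u ∈ Ω b t,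
    e = Filter.liminf (fun T : ℝ => ((ctrlCost f₀ traj t b u T : ℝ) : EReal)) Filter.atTop}

/-- The finite-horizon value function `V^T(θ, y)`. -/
def VT (f₀ : ℝ → F → P → ℝ) (traj : F → ℝ → (ℝ → P) → ℝ → F)
    (T θ : ℝ) (y : F) : ℝ :=
  sInf {r : ℝ | ∃ u ∈ Adm P, r = ctrlCost f₀ traj θ y u T}

/-- All the finite-horizon value functions are (well-defined and) finite. -/
def VTFinite (f₀ : ℝ → F → P → ℝ) (traj : F → ℝ → (ℝ → P) → ℝ → F) : Prop :=
  ∀ T θ : ℝ, ∀ y : F,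
    ({r : ℝ | ∃ u ∈ Adm P, r = ctrlCost f₀ traj θ y u T}).Nonempty ∧
    BddBelow {r : ℝ | ∃ u ∈ Adm P, r = ctrlCost f₀ traj θ y u T}

/-- A weakly agreeable control. -/
def WeaklyAgreeable (f₀ : ℝ → F → P → ℝ) (traj : F → ℝ → (ℝ → P) → ℝ → F)
    (bstar : F) (ustar : ℝ → P) : Prop :=
  ∀ t : ℝ, 0 ≤ t →
    Filter.liminf (fun T : ℝ =>
      ((ctrlCost f₀ traj 0 bstar ustar t
        + VT f₀ traj T t (traj bstar 0 ustar t) - VT f₀ traj T 0 bstar : ℝ) : EReal))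
      Filter.atTop ≤ 0

/-- An agreeable control. -/
def Agreeable (f₀ : ℝ → F → P → ℝ) (traj : F → ℝ → (ℝ → P) → ℝ → F)
    (bstar : F) (ustar : ℝ → P) : Prop :=
  ∀ t : ℝ, 0 ≤ t →
    Filter.limsup (fun T : ℝ =>
      ((ctrlCost f₀ traj 0 bstar ustar t
        + VT f₀ traj T t (traj bstar 0 ustar t) - VT f₀ traj T 0 bstar : ℝ) : EReal))
      Filter.atTop ≤ 0

section Superdifferentials

variable {H : Type*} [NormedAddCommGroup H] [InnerProductSpace ℝ H] [CompleteSpace H]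

/-- The Fréchet superdifferential of `h : H → ℝ` at `x`. -/
def frechetSuperdiff (h : H → ℝ) (x : H) : Set H :=
  {ζ | Filter.limsup
    (fun y => (((h y - h x - ⟪ζ, y - x⟫) / ‖y - x‖ : ℝ) : EReal)) (𝓝[≠] x) ≤ 0}

/-- The limiting superdifferential of `h : H → ℝ` at `x`. -/
def limitingSuperdiff (h : H → ℝ) (x : H) : Set H :=
  {ζ | ∃ xs : ℕ → H, ∃ ζs : ℕ → H,
    (∀ n, ζs n ∈ frechetSuperdiff h (xs n)) ∧
    Tendsto xs atTop (𝓝 x) ∧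
    Tendsto (fun n => h (xs n)) atTop (𝓝 (h x)) ∧
    Tendsto ζs atTop (𝓝 ζ)}

/-- The Fréchet superdifferential of `h : ℝ × H → ℝ` at `q`. -/
def frechetSuperdiffP (h : ℝ × H → ℝ) (q : ℝ × H) : Set (ℝ × H) :=
  {ζ | Filter.limsup
    (fun y : ℝ × H =>
      (((h y - h q - (ζ.1 * (y.1 - q.1) + ⟪ζ.2, y.2 - q.2⟫)) / ‖y - q‖ : ℝ) : EReal))
    (𝓝[≠] q) ≤ 0}

/-- The limiting superdifferential of `h : ℝ × H → ℝ` at `q`. -/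
def limitingSuperdiffP (h : ℝ × H → ℝ) (q : ℝ × H) : Set (ℝ × H) :=
  {ζ | ∃ qs : ℕ → ℝ × H, ∃ ζs : ℕ → ℝ × H,
    (∀ n, ζs n ∈ frechetSuperdiffP h (qs n)) ∧
    Tendsto qs atTop (𝓝 q) ∧
    Tendsto (fun n => h (qs n)) atTop (𝓝 (h q)) ∧
    Tendsto ζs atTop (𝓝 ζ)}

/-- The Hamilton–Pontryagin function `H(x, u, ψ, λ, t) = ψ·f(t,x,u) − λ f₀(t,x,u)`. -/
def Ham (f : ℝ → H → P → H) (f₀ : ℝ → H → P → ℝ)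
    (x : H) (u : P) (ψv : H) (lam t : ℝ) : ℝ :=
  ⟪ψv, f t x u⟫ - lam * f₀ t x u

/-- The PMP relations with `λ = 1` along `(x*, u*)` for a costate arc `ψ`:
the adjoint equation `−ψ̇(s) = ∂H/∂x` on `[0,∞)` and the a.e. maximum condition. -/
def PMPNormal (f : ℝ → H → P → H) (f₀ : ℝ → H → P → ℝ)
    (xstar : ℝ → H) (ustar : ℝ → P) (ψ : ℝ → H) : Prop :=
  ContinuousOn ψ (Set.Ici 0) ∧
  (∀ s : ℝ, 0 ≤ s →
    HasDerivWithinAt ψ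
      (-(gradient (fun x => Ham f f₀ x (ustar s) (ψ s) 1 s) (xstar s))) (Set.Ici 0) s) ∧
  (∀ᵐ s ∂(volume.restrict (Set.Ici (0:ℝ))),
    IsGreatest (Set.range fun v : P => Ham f f₀ (xstar s) v (ψ s) 1 s)
      (Ham f f₀ (xstar s) (ustar s) (ψ s) 1 s))

/-- The sensitivity relation (sens1): `−ψ(0) ∈ ∂⁺ₓ V(0, x*(0))`. -/
def Sens1 (V : ℝ → H → ℝ) (xstar : ℝ → H) (ψ : ℝ → H) : Prop :=
  -ψ 0 ∈ limitingSuperdiff (fun x => V 0 x) (xstar 0)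

/-- The sensitivity relation (sens2):
`(H(x*(s), u*(s), ψ(s), 1, s), −ψ(s)) ∈ ∂⁺V(s, x*(s))` for a.e. `s ≥ 0`. -/
def Sens2 (f : ℝ → H → P → H) (f₀ : ℝ → H → P → ℝ) (V : ℝ → H → ℝ)
    (xstar : ℝ → H) (ustar : ℝ → P) (ψ : ℝ → H) : Prop :=
  ∀ᵐ s ∂(volume.restrict (Set.Ici (0:ℝ))),
    (Ham f f₀ (xstar s) (ustar s) (ψ s) 1 s, -ψ s)
      ∈ limitingSuperdiffP (fun q => V q.1 q.2) (s, xstar s)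

end Superdifferentials

/-- The controls steering the state asymptotically to the target set `M`. -/
def OmegaM (traj : F → ℝ → (ℝ → P) → ℝ → F) (M : Set F) (b : F) (t : ℝ) :
    Set (ℝ → P) :=
  {u | u ∈ Adm P ∧
    Tendsto (fun s => Metric.infDist (traj b t u s) M) atTop (𝓝 0)}

/-- The controls for which the running cost has a convergent improper integral. -/
def OmegaR (f₀ : ℝ → F → P → ℝ) (traj : F → ℝ → (ℝ → P) → ℝ → F)
    (b : F) (t : ℝ) : Set (ℝ → P) :=
  {u | u ∈ Adm P ∧ ∃ c : ℝ, Tendsto (fun τ => ctrlCost f₀ traj t b u τ) atTop (𝓝 c)}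

section TwoBlocks

variable {Er Es : Type*} [NormedAddCommGroup Er] [NormedSpace ℝ Er] [CompleteSpace Er]
  [NormedAddCommGroup Es] [NormedSpace ℝ Es] [CompleteSpace Es]

/-- The optimal-time function `Q'_𝕎` with control values restricted to `P'`. -/
def Qprime (traj : Er × Es → ℝ → (ℝ → P) → ℝ → Er × Es) (P' : Set P) (𝕎 : Set Er)
    (t' : ℝ) (y' : Er × Es) (z : Es) : EReal :=
  sInf {e : EReal | ∃ τ : ℝ, 0 ≤ τ ∧ e = (τ : EReal) ∧
    ∃ u ∈ Adm P, (∀ t, u t ∈ P') ∧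
      (traj y' t' u (t' + τ)).1 ∈ 𝕎 ∧ (traj y' t' u (t' + τ)).2 = z}

/-- The optimal-time function `Q_𝕎`. -/
def Qmin (traj : Er × Es → ℝ → (ℝ → P) → ℝ → Er × Es) (𝕎 : Set Er)
    (t' : ℝ) (y' : Er × Es) (z : Es) : EReal :=
  sInf {e : EReal | ∃ τ : ℝ, 0 ≤ τ ∧ e = (τ : EReal) ∧
    ∃ u ∈ Adm P, (traj y' t' u (t' + τ)).1 ∈ 𝕎 ∧ (traj y' t' u (t' + τ)).2 = z}

/-- The maximal-time function `Q^𝕎`; it equals `+∞` if some motion never reaches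
`𝕎 × {z}`. -/
def Qmax (traj : Er × Es → ℝ → (ℝ → P) → ℝ → Er × Es) (𝕎 : Set Er)
    (t' : ℝ) (y' : Er × Es) (z : Es) : EReal :=
  if ∃ u ∈ Adm P, ∀ τ : ℝ, 0 ≤ τ →
      ¬((traj y' t' u (t' + τ)).1 ∈ 𝕎 ∧ (traj y' t' u (t' + τ)).2 = z) then ⊤
  else sSup {e : EReal | ∃ τ : ℝ, 0 ≤ τ ∧ e = (τ : EReal) ∧
    ∃ u ∈ Adm P, (traj y' t' u (t' + τ)).1 ∈ 𝕎 ∧ (traj y' t' u (t' + τ)).2 = z}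

end TwoBlocks


/-- The admissible controls of the scalar example: measurable with values in
`[-1/2, 1/2]`. -/
def Uc : Set (ℝ → ℝ) :=
  {u | Measurable u ∧ ∀ t : ℝ, u t ∈ Set.Icc (-(1/2) : ℝ) (1/2)}

/-- The cost `J(0, b; u, T)` of the scalar example, where `X u b` is the motion
`x_{b,0,u}` of `ẋ = 2u − x`, `x(0) = b`, and the running cost is `2u + |u| − x`. -/
def Jc (X : (ℝ → ℝ) → ℝ → ℝ → ℝ) (u : ℝ → ℝ) (b T : ℝ) : ℝ :=
  ∫ s in (0:ℝ)..T, (2 * u s + |u s| - X u b s)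

/-! The motion solves a linear equation, so by variation of constants
`x(T) = e⁻ᵀ b + ∫₀ᵀ e^(s-T) 2u(s) ds`: hence `|x| ≤ |b| + 1`, and `x(T) → 0` when `u ∈ L¹` by
dominated convergence. Since `f₀ = ẋ + |u|`, `J(0,b;u,T) = x(T) - b + ∫₀ᵀ |u|`. If `u ∉ L¹` this
tends to `+∞`; if `u ∈ L¹` it tends to `-b + ‖u‖₁ ≥ -b`, with equality for `u = 0`. -/

open Real

theorem MeasureTheory.LocallyIntegrable.intervalIntegrable {E : Type*} [NormedAddCommGroup E]
    {f : ℝ → E} (hf : LocallyIntegrable f) (a c : ℝ) : IntervalIntegrable f volume a c :=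
  intervalIntegrable_iff.2 ((hf.integrableOn_isCompact isCompact_uIcc).mono_set uIoc_subset_uIcc)

theorem tendsto_intervalIntegral_norm_atTop_of_not_integrableOn {E : Type*}
    [NormedAddCommGroup E] {f : ℝ → E} (hf : LocallyIntegrable f) {a : ℝ}
    (h : ¬IntegrableOn f (Ioi a)) : Tendsto (fun t => ∫ s in a..t, ‖f s‖) atTop atTop := by
  have hfi := fun a c => (hf.intervalIntegrable a c).norm
  refine tendsto_atTop_atTop_of_monotone' (fun t₁ t₂ ht => ?_) fun ⟨C, hC⟩ => h ?_
  · rw [← intervalIntegral.integral_add_adjacent_intervals (hfi a t₁) (hfi t₁ t₂)]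
    exact le_add_of_nonneg_right (intervalIntegral.integral_nonneg ht fun _ _ => norm_nonneg _)
  · exact integrableOn_Ioi_of_intervalIntegral_norm_bounded C a
      (fun t => (hf.integrableOn_isCompact isCompact_Icc).mono_set Ioc_subset_Icc_self)
      tendsto_id (Eventually.of_forall fun t => hC (mem_range_self t))

section LinearODE

variable {v x : ℝ → ℝ} {b : ℝ}

theorem exp_mul_eq_of_intervalIntegrable
    (hx : ∀ t, x t = b + ∫ s in 0..t, (v s - x s)) {t : ℝ}
    (hg : IntervalIntegrable (fun s => v s - x s) volume 0 t) :
    exp t * x t = b + ∫ s in 0..t, exp s * v s := by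
  have hx' : x = fun s => b + ∫ r in 0..s, (v r - x r) := funext hx
  have hF : AbsolutelyContinuousOnInterval (fun s => exp s * x s) 0 t := by
    rw [hx']
    exact contDiff_exp.contDiffOn.absolutelyContinuousOnInterval.fun_mul
      ((contDiffOn_const.absolutelyContinuousOnInterval).add
        (hg.absolutelyContinuousOnInterval_intervalIntegral (by simp)))
  have hderiv : ∀ᵐ s, s ∈ uIoc 0 t → deriv (fun s => exp s * x s) s = exp s * v s := by
    filter_upwards [hg.ae_hasDerivAt_integral] with s hs hst
    have h := (hasDerivAt_exp s).mul ((hs (uIoc_subset_uIcc hst) 0 (by simp)).const_add b)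
    rw [← hx', ← hx s] at h
    rw [show (fun s => exp s * x s) = exp * x from rfl, h.deriv]
    ring
  have hFTC := hF.integral_deriv_eq_sub
  rw [intervalIntegral.integral_congr_ae hderiv, hx 0] at hFTC
  simp only [exp_zero, intervalIntegral.integral_same, one_mul, add_zero] at hFTC
  linarith

/-- The hypothesis `hx` also holds where `v - x` is not integrable (the integral is then `0`),
so integrability has to be proved. Past the first time `T` where it fails, `hx` forces `x = b`,
while before `T` the formula above makes `x` continuous; so `x` is integrable on `[0, T + 1]`
after all. -/
theorem intervalIntegrable_sub_of_forall_eq (hv : LocallyIntegrable v)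
    (hx : ∀ t, x t = b + ∫ s in 0..t, (v s - x s)) {t : ℝ} (ht : 0 ≤ t) :
    IntervalIntegrable (fun s => v s - x s) volume 0 t := by
  set g := fun s => v s - x s
  by_contra hbad
  set B := {t | 0 ≤ t ∧ ¬IntervalIntegrable g volume 0 t}
  have hB : B.Nonempty := ⟨t, ht, hbad⟩
  set T := sInf B
  have hT : 0 ≤ T := le_csInf hB fun _ h => h.1
  have good : ∀ s ∈ Ico 0 T, IntervalIntegrable g volume 0 s := fun s hs => by
    by_contra h
    exact (csInf_le (show BddBelow B from ⟨0, fun _ h => h.1⟩) ⟨hs.1, h⟩).not_gt hs.2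
  have bad : ∀ s, T < s → ¬IntervalIntegrable g volume 0 s := fun s hs h => by
    obtain ⟨r, ⟨hr0, hr⟩, hrs⟩ := exists_lt_of_csInf_lt hB hs
    exact hr (h.mono_set (by
      rw [uIcc_of_le hr0, uIcc_of_le (hr0.trans hrs.le)]; exact Icc_subset_Icc_right hrs.le))
  set y := fun s => exp (-s) * (b + ∫ r in 0..s, exp r * v r)
  have hy : Continuous y := (continuous_exp.comp continuous_neg).mul (continuous_const.add
    (intervalIntegral.continuous_primitive (fun a c =>
      (hv.intervalIntegrable a c).continuousOn_mul continuous_exp.continuousOn) 0))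
  have hxy : EqOn x y (Ioo 0 T) := fun s hs => by
    simp only [y]
    rw [← exp_mul_eq_of_intervalIntegrable hx (good s (Ioo_subset_Ico_self hs)), ← mul_assoc,
      ← exp_add, neg_add_cancel, exp_zero, one_mul]
  have hxb : EqOn x (fun _ => b) (Ioc T (T + 1)) := fun s hs => by
    rw [hx s, intervalIntegral.integral_undef (bad s hs.1), add_zero]
  have hxint : IntegrableOn x (Ioc 0 (T + 1)) := by
    rw [← Ioc_union_Ioc_eq_Ioc hT (by linarith)]
    refine IntegrableOn.union ?_ ?_
    · rw [integrableOn_Ioc_iff_integrableOn_Ioo]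
      exact (hy.integrableOn_Icc.mono_set Ioo_subset_Icc_self).congr_fun hxy.symm
        measurableSet_Ioo
    · exact (integrableOn_const measure_Ioc_lt_top.ne).congr_fun hxb.symm measurableSet_Ioc
  exact bad (T + 1) (by linarith) ((hv.intervalIntegrable 0 (T + 1)).sub
    ((intervalIntegrable_iff_integrableOn_Ioc_of_le (by linarith)).2 hxint))

theorem eq_exp_neg_mul_add_integral (hv : LocallyIntegrable v)
    (hx : ∀ t, x t = b + ∫ s in 0..t, (v s - x s)) {t : ℝ} (ht : 0 ≤ t) :
    x t = exp (-t) * b + ∫ s in 0..t, exp (s - t) * v s := by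
  have h := exp_mul_eq_of_intervalIntegrable hx (intervalIntegrable_sub_of_forall_eq hv hx ht)
  have hexp : ∫ s in 0..t, exp (s - t) * v s = exp (-t) * ∫ s in 0..t, exp s * v s := by
    rw [← intervalIntegral.integral_const_mul]
    refine intervalIntegral.integral_congr fun s _ => ?_
    simp only [sub_eq_add_neg, exp_add]
    ring
  rw [hexp, ← mul_add, ← h, ← mul_assoc, ← exp_add, neg_add_cancel, exp_zero, one_mul]

theorem abs_le_abs_add_of_abs_le {M : ℝ} (hv : LocallyIntegrable v) (hvM : ∀ s, |v s| ≤ M)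
    (hx : ∀ t, x t = b + ∫ s in 0..t, (v s - x s)) {t : ℝ} (ht : 0 ≤ t) :
    |x t| ≤ |b| + M := by
  have hM : 0 ≤ M := (abs_nonneg _).trans (hvM 0)
  have hint : ‖∫ s in 0..t, exp (s - t) * v s‖ ≤ ∫ s in 0..t, M * exp (s - t) := by
    refine intervalIntegral.norm_integral_le_of_norm_le ht (ae_of_all _ fun s _ => ?_)
      ((by fun_prop : Continuous fun s => M * exp (s - t)).intervalIntegrable (μ := volume) _ _)
    rw [Real.norm_eq_abs, abs_mul, abs_exp, mul_comm]
    exact mul_le_mul_of_nonneg_right (hvM s) (exp_pos _).le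
  have hexp : ∫ s in 0..t, M * exp (s - t) = M * (1 - exp (-t)) := by
    rw [intervalIntegral.integral_const_mul, intervalIntegral.integral_comp_sub_right exp,
      integral_exp, sub_self, exp_zero, zero_sub]
  have he : exp (-t) ≤ 1 := exp_le_one_iff.2 (by linarith)
  rw [eq_exp_neg_mul_add_integral hv hx ht]
  calc |exp (-t) * b + ∫ s in 0..t, exp (s - t) * v s|
      ≤ exp (-t) * |b| + M * (1 - exp (-t)) := by
        refine (abs_add_le _ _).trans
          (add_le_add ?_ ((Real.norm_eq_abs _).symm.le.trans (hint.trans hexp.le)))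
        rw [abs_mul, abs_exp]
    _ ≤ |b| + M := by nlinarith [abs_nonneg b, exp_pos (-t)]

theorem tendsto_integral_exp_sub_mul_zero (hv : IntegrableOn v (Ioi 0)) :
    Tendsto (fun t => ∫ s in 0..t, exp (s - t) * v s) atTop (𝓝 0) := by
  set F := fun t s => (Iic t).indicator (fun s => exp (s - t) * v s) s
  have hF : ∀ᶠ t in atTop, ∫ s in 0..t, exp (s - t) * v s = ∫ s in Ioi 0, F t s := by
    filter_upwards [eventually_ge_atTop 0] with t ht
    rw [intervalIntegral.integral_of_le ht, setIntegral_indicator measurableSet_Iic, Ioi_inter_Iic]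
  rw [tendsto_congr' hF]
  convert tendsto_integral_filter_of_dominated_convergence (μ := volume.restrict (Ioi 0))
    (l := atTop) (F := F) (f := fun _ => 0) (fun s => ‖v s‖)
    (Eventually.of_forall fun t => ?_) (Eventually.of_forall fun t => ae_of_all _ fun s => ?_)
    hv.norm (ae_of_all _ fun s => ?_) using 1
  · simp
  · exact (((continuous_exp.comp (continuous_id.sub continuous_const)).aestronglyMeasurable).mul
      hv.1).indicator measurableSet_Iic
  · by_cases hs : s ≤ t
    · simp only [F, indicator_of_mem (show s ∈ Iic t from hs), norm_mul, Real.norm_eq_abs,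
        abs_exp]
      exact mul_le_of_le_one_left (abs_nonneg _) (exp_le_one_iff.2 (by linarith))
    · simp [F, indicator_of_notMem (show s ∉ Iic t from hs)]
  · have hlim : Tendsto (fun t => exp (s - t) * v s) atTop (𝓝 0) := by
      simpa [← sub_eq_add_neg] using (tendsto_exp_atBot.comp (tendsto_atBot_add_const_left _ s
        tendsto_neg_atTop_atBot)).mul_const (v s)
    refine hlim.congr' ?_
    filter_upwards [eventually_ge_atTop s] with t ht
    simp [F, indicator_of_mem (show s ∈ Iic t from ht)]

theorem tendsto_zero_of_integrableOn (hv : LocallyIntegrable v) (hvi : IntegrableOn v (Ioi 0))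
    (hx : ∀ t, x t = b + ∫ s in 0..t, (v s - x s)) : Tendsto x atTop (𝓝 0) := by
  have h := ((tendsto_exp_neg_atTop_nhds_zero.mul_const b).add
    (tendsto_integral_exp_sub_mul_zero hvi))
  rw [zero_mul, zero_add] at h
  refine h.congr' ?_
  filter_upwards [eventually_ge_atTop 0] with t ht
  exact (eq_exp_neg_mul_add_integral hv hx ht).symm

end LinearODE

section ScalarExample

variable {X : (ℝ → ℝ) → ℝ → ℝ → ℝ} {u : ℝ → ℝ} {b : ℝ}

theorem abs_le_of_mem_Uc (hu : u ∈ Uc) (t : ℝ) : |u t| ≤ 1 / 2 := abs_le.2 (hu.2 t)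

theorem locallyIntegrable_of_mem_Uc (hu : u ∈ Uc) : LocallyIntegrable u :=
  (locallyIntegrable_const (1 / 2 : ℝ)).mono hu.1.aestronglyMeasurable
    (ae_of_all _ fun t => by simpa using abs_le_of_mem_Uc hu t)

theorem Jc_eq (hu : u ∈ Uc) (hx : ∀ t, X u b t = b + ∫ s in 0..t, (2 * u s - X u b s))
    {T : ℝ} (hT : 0 ≤ T) :
    Jc X u b T = X u b T - b + ∫ s in 0..T, |u s| := by
  have hu' := locallyIntegrable_of_mem_Uc hu
  have hg := intervalIntegrable_sub_of_forall_eq (hu'.continuous_mul continuous_const) hx hT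
  rw [Jc, intervalIntegral.integral_congr fun s _ => (sub_add_eq_add_sub ..).symm,
    intervalIntegral.integral_add hg (hu'.intervalIntegrable 0 T).abs, hx T]
  ring

theorem tendsto_Jc_atTop (hu : u ∈ Uc)
    (hx : ∀ t, X u b t = b + ∫ s in 0..t, (2 * u s - X u b s))
    (hui : ¬IntegrableOn u (Ioi 0)) :
    Tendsto (Jc X u b) atTop atTop := by
  have hu' := locallyIntegrable_of_mem_Uc hu
  have hI := tendsto_intervalIntegral_norm_atTop_of_not_integrableOn hu' hui
  simp only [Real.norm_eq_abs] at hI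
  refine tendsto_atTop_mono' _ ?_ (tendsto_atTop_add_const_left _ (-(|b| + 1) - b) hI)
  filter_upwards [eventually_ge_atTop 0] with T hT
  have hxT := abs_le_abs_add_of_abs_le (M := 1) (hu'.continuous_mul continuous_const)
    (fun s => by rw [abs_mul, abs_two]; linarith [abs_le_of_mem_Uc hu s]) hx hT
  rw [Jc_eq hu hx hT]
  linarith [neg_abs_le (X u b T)]

theorem tendsto_motion_zero (hu : u ∈ Uc)
    (hx : ∀ t, X u b t = b + ∫ s in 0..t, (2 * u s - X u b s))
    (hui : IntegrableOn u (Ioi 0)) : Tendsto (X u b) atTop (𝓝 0) :=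
  tendsto_zero_of_integrableOn ((locallyIntegrable_of_mem_Uc hu).continuous_mul continuous_const)
    (hui.const_mul 2) hx

theorem tendsto_Jc_nhds (hu : u ∈ Uc)
    (hx : ∀ t, X u b t = b + ∫ s in 0..t, (2 * u s - X u b s))
    (hui : IntegrableOn u (Ioi 0)) :
    Tendsto (Jc X u b) atTop (𝓝 (-b + ∫ s in Ioi 0, |u s|)) := by
  have h := ((tendsto_motion_zero hu hx hui).sub_const b).add
    (intervalIntegral_tendsto_integral_Ioi 0 hui.abs tendsto_id)
  rw [zero_sub] at h
  refine h.congr' ?_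
  filter_upwards [eventually_ge_atTop 0] with T hT
  exact (Jc_eq hu hx hT).symm

end ScalarExample

theorem example_Vinf_eq_neg_b (X : (ℝ → ℝ) → ℝ → ℝ → ℝ)
    (hX : ∀ u ∈ Uc, ∀ b t : ℝ, X u b t = b + ∫ s in (0:ℝ)..t, (2 * u s - X u b s)) :
    (∀ b : ℝ,
      sInf {e : EReal | ∃ u ∈ Uc,
          e = Filter.liminf (fun T : ℝ => ((Jc X u b T : ℝ) : EReal)) Filter.atTop}
        = ((-b : ℝ) : EReal)) ∧
    ∀ b : ℝ, ∀ u ∈ Uc, ∀ c : ℝ, Tendsto (fun T : ℝ => Jc X u b T) atTop (𝓝 c) →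
      MeasureTheory.IntegrableOn u (Set.Ici 0) ∧
      Tendsto (fun T : ℝ => X u b T) atTop (𝓝 0) ∧
      b + c = ∫ s in Set.Ici (0:ℝ), |u s| ∧
      0 ≤ b + c := by
  have hL : ∀ u : ℝ → ℝ, 0 ≤ ∫ s in Ioi (0:ℝ), |u s| := fun u =>
    setIntegral_nonneg measurableSet_Ioi fun _ _ => abs_nonneg _
  refine ⟨fun b => le_antisymm ?_ ?_, fun b u hu c hc => ?_⟩
  · have h0 : (fun _ : ℝ => (0 : ℝ)) ∈ Uc := ⟨measurable_const, fun _ => by norm_num⟩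
    have hJ := tendsto_Jc_nhds h0 (hX _ h0 b) integrableOn_zero
    rw [show -b + ∫ s in Ioi (0:ℝ), |(fun _ : ℝ => (0:ℝ)) s| = -b by simp] at hJ
    exact sInf_le ⟨_, h0, (EReal.tendsto_coe.2 hJ).liminf_eq.symm⟩
  · refine le_sInf ?_
    rintro e ⟨u, hu, rfl⟩
    by_cases hui : IntegrableOn u (Ioi 0)
    · rw [(EReal.tendsto_coe.2 (tendsto_Jc_nhds hu (hX u hu b) hui)).liminf_eq]
      exact EReal.coe_le_coe_iff.2 (le_add_of_nonneg_right (hL u))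
    · rw [(EReal.tendsto_coe_nhds_top_iff.2 (tendsto_Jc_atTop hu (hX u hu b) hui)).liminf_eq]
      exact le_top
  · have hui : IntegrableOn u (Ioi 0) := by
      by_contra hui
      exact not_tendsto_nhds_of_tendsto_atTop (tendsto_Jc_atTop hu (hX u hu b) hui) c hc
    have hc' := tendsto_nhds_unique hc (tendsto_Jc_nhds hu (hX u hu b) hui)
    refine ⟨(integrableOn_Ici_iff_integrableOn_Ioi).2 hui, tendsto_motion_zero hu (hX u hu b) hui,
      ?_, ?_⟩ <;> rw [hc'] <;> simp [integral_Ici_eq_integral_Ioi, hL u]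
end
end

section
/- For the scalar control system ẋ = 2u − x with running cost f₀(t,x,u) = 2u + |u| − x and control set P = [−1/2, 1/2], the finite-horizon value function V^T(0,b) := inf_{u ∈ 𝕌} J(0,b;u,T) satisfies, for all T > 1 and b ∈ ℝ, V^T(0,b) = b e^{−T} − 1/2 − b + (ln 2)/2; consequently V^all(0,b) := lim_{T→∞} V^T(0,b) = −b + (ln 2 − 1)/2, and hence V^all(0,b) < V^inf(0,b) = −b for every b ∈ ℝ, where V^inf(t,b) := inf_{u ∈ 𝕌} liminf_{T→∞} J(t,b;u,T). -/
/-!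
Duhamel's formula `x(T) = b e^{-T} + ∫₀ᵀ 2 e^{s-T} u(s) ds` turns the cost into
`J(0, b; u, T) = b e^{-T} - b + ∫₀ᵀ (2 e^{s-T} u(s) + |u(s)|) ds`. Over `|p| ≤ 1/2` the integrand
`2 e^{s-T} p + |p|` is minimised by `p = -1/2` when `e^{s-T} > 1/2` and by `p = 0` otherwise, with
minimum `min 0 (1/2 - e^{s-T})`; integrating this gives `V^T(0, b)`.

For `V^inf`, the control `u = 0` costs `b e^{-T} - b → -b`. Any control costs at least `-b` in the
limit: the integrand is `≥ |u(s)| (1 - 2 e^{s-T})`, which is negative only on `(T - log 2, T]`.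
If `∫₀^∞ |u| < ∞` the contribution of that last stretch vanishes as `T → ∞`; otherwise
`∫₀ᵀ |u| - 1`, a lower bound for the integral, tends to `∞`.
-/

open Filter Topology MeasureTheory Metric Set Bornology
open scoped RealInnerProductSpace Classical

noncomputable section

variable {P : Type*} [MetricSpace P] [MeasurableSpace P] [BorelSpace P]
  [CompleteSpace P] [TopologicalSpace.SeparableSpace P] [Nonempty P]
variable {F : Type*} [NormedAddCommGroup F] [NormedSpace ℝ F] [CompleteSpace F]

open Real

lemma EReal.coe_le_liminf_of_tendsto {α : Type*} {l : Filter α} [l.NeBot] {f g : α → ℝ}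
    {a : ℝ} (hg : Tendsto g l (𝓝 a)) (hgf : g ≤ᶠ[l] f) :
    (a : EReal) ≤ liminf (fun x => (f x : EReal)) l := by
  rw [← (EReal.tendsto_coe.2 hg).liminf_eq]
  exact liminf_le_liminf (hgf.mono fun _ h => EReal.coe_le_coe_iff.2 h)

lemma exp_neg_log_two : exp (-log 2) = 1 / 2 := by rw [exp_neg, exp_log two_pos, one_div]

lemma min_le_two_mul_mul_add_abs {a p : ℝ} (ha : 0 ≤ a) (hp : |p| ≤ 1 / 2) :
    min 0 (1 / 2 - a) ≤ 2 * a * p + |p| := by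
  have h : |p| * (1 - 2 * a) ≤ 2 * a * p + |p| := by nlinarith [neg_abs_le p]
  rcases le_total a (1 / 2) with h2a | h2a
  · exact (min_le_left _ _).trans (by nlinarith [abs_nonneg p])
  · exact (min_le_right _ _).trans (by nlinarith)

lemma two_mul_mul_add_abs_ite (a : ℝ) :
    2 * a * (if 1 / 2 < a then -1 / 2 else 0) + |if 1 / 2 < a then -1 / 2 else (0 : ℝ)|
      = min 0 (1 / 2 - a) := by
  split_ifs with ha
  · rw [min_eq_right (by linarith), abs_of_neg (by norm_num)]; ring
  · rw [min_eq_left (by linarith)]; simp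

lemma exp_mul_eq_add_integral_of_eq_add_integral {x g : ℝ → ℝ} {x₀ T : ℝ}
    (hT : 0 ≤ T) (hint : IntervalIntegrable (fun s => g s - x s) volume 0 T)
    (hx : ∀ t ∈ Icc 0 T, x t = x₀ + ∫ s in (0:ℝ)..t, (g s - x s)) :
    exp T * x T = x₀ + ∫ s in (0:ℝ)..T, exp s * g s := by
  set φ : ℝ → ℝ := fun t => exp t * (x₀ + ∫ s in (0:ℝ)..t, (g s - x s))
  have hφ : AbsolutelyContinuousOnInterval φ 0 T :=
    (contDiff_exp.contDiffOn.absolutelyContinuousOnInterval).fun_mul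
      ((contDiffOn_const.absolutelyContinuousOnInterval).fun_add
        (hint.absolutelyContinuousOnInterval_intervalIntegral (by simp)))
  have hderiv : ∀ᵐ s, s ∈ uIoc 0 T → deriv φ s = exp s * g s := by
    filter_upwards [hint.ae_hasDerivAt_integral] with s hs hsT
    have hsT' : s ∈ uIcc 0 T := uIoc_subset_uIcc hsT
    have hφs : HasDerivAt φ
        (exp s * (x₀ + ∫ r in (0:ℝ)..s, (g r - x r)) + exp s * (g s - x s)) s :=
      (hasDerivAt_exp s).mul ((hs hsT' 0 (by simp)).const_add x₀)
    rw [hφs.deriv, ← hx s (by rwa [uIcc_of_le hT] at hsT')]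
    ring
  calc exp T * x T = φ T - φ 0 + x₀ := by simp [φ, hx T ⟨hT, le_rfl⟩]
    _ = x₀ + ∫ s in (0:ℝ)..T, exp s * g s := by
      rw [← hφ.integral_deriv_eq_sub, intervalIntegral.integral_congr_ae hderiv]; ring

/-- The integral in `hx` is the junk value `0` wherever `g - x` fails to be integrable, so past
the first such time `c` the function `x` is constant, while before `c` it is given by Duhamel's
formula: `g - x` is then integrable a little beyond `c` after all. -/
lemma intervalIntegrable_sub_of_eq_add_integral {x g : ℝ → ℝ} {x₀ : ℝ}
    (hg : ∀ a b, IntervalIntegrable g volume a b)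
    (hx : ∀ t, x t = x₀ + ∫ s in (0:ℝ)..t, (g s - x s)) {T : ℝ} (hT : 0 ≤ T) :
    IntervalIntegrable (fun s => g s - x s) volume 0 T := by
  by_contra hT_bad
  set S := {t | 0 ≤ t ∧ ¬ IntervalIntegrable (fun s => g s - x s) volume 0 t}
  have hS : S.Nonempty := ⟨T, hT, hT_bad⟩
  set c := sInf S
  have hc : 0 ≤ c := le_csInf hS fun t ht => ht.1
  have hbelow (t : ℝ) (ht : t ∈ Ico 0 c) :
      IntervalIntegrable (fun s => g s - x s) volume 0 t :=
    by_contra fun h => (csInf_le (⟨0, fun _ ht => ht.1⟩ : BddBelow S) ⟨ht.1, h⟩).not_gt ht.2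
  have habove (t : ℝ) (ht : c < t) : ¬ IntervalIntegrable (fun s => g s - x s) volume 0 t := by
    obtain ⟨t', ⟨ht'0, ht'⟩, ht't⟩ := exists_lt_of_csInf_lt hS ht
    refine fun h => ht' (h.mono_set ?_)
    rw [uIcc_of_le ht'0, uIcc_of_le (by linarith)]
    exact Icc_subset_Icc le_rfl ht't.le
  set y : ℝ → ℝ := fun t => exp (-t) * (x₀ + ∫ s in (0:ℝ)..t, exp s * g s)
  have hy : Continuous y := (continuous_exp.comp continuous_neg).mul (continuous_const.add
    (intervalIntegral.continuous_primitive
      (fun a b => (hg a b).continuousOn_mul continuous_exp.continuousOn) 0))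
  have hxy (t : ℝ) (ht : t ∈ Ico 0 c) : x t = y t := by
    have hduhamel :=
      exp_mul_eq_add_integral_of_eq_add_integral ht.1 (hbelow t ht) (fun s _ => hx s)
    simp only [y, ← hduhamel, ← mul_assoc, ← exp_add, neg_add_cancel, exp_zero, one_mul]
  have hleft : IntervalIntegrable (fun s => g s - x s) volume 0 c := by
    rw [intervalIntegrable_iff_integrableOn_Ioo_of_le hc]
    exact ((intervalIntegrable_iff_integrableOn_Ioo_of_le hc).1
      ((hg 0 c).sub (hy.intervalIntegrable 0 c))).congr_fun
        (fun s hs => by simp [hxy s ⟨hs.1.le, hs.2⟩]) measurableSet_Ioo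
  have hright : IntervalIntegrable (fun s => g s - x s) volume c (c + 1) := by
    have hconst : IntervalIntegrable (fun s => g s - x₀) volume c (c + 1) :=
      (hg c (c + 1)).sub intervalIntegrable_const
    rw [intervalIntegrable_iff_integrableOn_Ioc_of_le (by linarith)] at hconst ⊢
    refine hconst.congr_fun (fun s hs => ?_) measurableSet_Ioc
    rw [hx s, intervalIntegral.integral_undef (habove s hs.1), add_zero]
  exact habove (c + 1) (by linarith) (hleft.trans hright)

section ScalarExample

variable {X : (ℝ → ℝ) → ℝ → ℝ → ℝ} {u : ℝ → ℝ} {b T : ℝ}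

lemma abs_le_half_of_mem_Uc (hu : u ∈ Uc) (s : ℝ) : |u s| ≤ 1 / 2 := abs_le.2 (hu.2 s)

lemma intervalIntegrable_of_mem_Uc (hu : u ∈ Uc) (a c : ℝ) :
    IntervalIntegrable u volume a c :=
  intervalIntegrable_iff.2 <| Measure.integrableOn_of_bounded
    ((measure_mono uIoc_subset_uIcc).trans_lt measure_Icc_lt_top).ne
    hu.1.aestronglyMeasurable (M := 1 / 2) (.of_forall (abs_le_half_of_mem_Uc hu))

lemma intervalIntegrable_exp_mul_add_abs (hu : u ∈ Uc) (T a c : ℝ) :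
    IntervalIntegrable (fun s => 2 * exp (s - T) * u s + |u s|) volume a c :=
  ((intervalIntegrable_of_mem_Uc hu a c).continuousOn_mul (by fun_prop)).add
    (intervalIntegrable_of_mem_Uc hu a c).abs

lemma Jc_eq_integral (hXu : ∀ t, X u b t = b + ∫ s in (0:ℝ)..t, (2 * u s - X u b s))
    (hu : u ∈ Uc) (hT : 0 ≤ T) :
    Jc X u b T = b * exp (-T) - b + ∫ s in (0:ℝ)..T, (2 * exp (s - T) * u s + |u s|) := by
  have hu_int := intervalIntegrable_of_mem_Uc hu
  have hF := intervalIntegrable_sub_of_eq_add_integral (fun a c => (hu_int a c).const_mul 2)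
    hXu hT
  have hduhamel := exp_mul_eq_add_integral_of_eq_add_integral hT hF fun t _ => hXu t
  have hJ : Jc X u b T = X u b T - b + ∫ s in (0:ℝ)..T, |u s| := by
    calc Jc X u b T = ∫ s in (0:ℝ)..T, ((2 * u s - X u b s) + |u s|) := by
          rw [Jc]; congr 1 with s; ring
      _ = X u b T - b + ∫ s in (0:ℝ)..T, |u s| := by
          rw [intervalIntegral.integral_add hF (hu_int 0 T).abs, hXu T]; ring
  have hexp : ∫ s in (0:ℝ)..T, 2 * exp (s - T) * u s
      = exp (-T) * ∫ s in (0:ℝ)..T, exp s * (2 * u s) := by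
    rw [← intervalIntegral.integral_const_mul]
    congr 1 with s
    rw [sub_eq_add_neg, exp_add]
    ring
  have hXT : X u b T = exp (-T) * (exp T * X u b T) := by
    rw [← mul_assoc, ← exp_add, neg_add_cancel, exp_zero, one_mul]
  rw [hJ, intervalIntegral.integral_add ((hu_int 0 T).continuousOn_mul (by fun_prop))
    (hu_int 0 T).abs, hexp, hXT, hduhamel]
  ring

lemma integral_min_zero_half_sub_exp (hT : log 2 ≤ T) :
    ∫ s in (0:ℝ)..T, min 0 (1 / 2 - exp (s - T)) = (log 2 - 1) / 2 := by
  have hcont : Continuous fun s => min 0 (1 / 2 - exp (s - T)) := by fun_prop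
  have hlog : 0 < log 2 := log_pos one_lt_two
  rw [← intervalIntegral.integral_add_adjacent_intervals (b := T - log 2)
    (hcont.intervalIntegrable _ _) (hcont.intervalIntegrable _ _)]
  have hleft : EqOn (fun s => min 0 (1 / 2 - exp (s - T))) 0 (uIcc 0 (T - log 2)) := by
    intro s hs
    rw [uIcc_of_le (by linarith)] at hs
    have : exp (s - T) ≤ 1 / 2 := exp_neg_log_two ▸ exp_le_exp.2 (by linarith [hs.2])
    exact min_eq_left (by linarith)
  have hright : EqOn (fun s => min 0 (1 / 2 - exp (s - T))) (fun s => 1 / 2 - exp (s - T))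
      (uIcc (T - log 2) T) := by
    intro s hs
    rw [uIcc_of_le (by linarith)] at hs
    have : 1 / 2 ≤ exp (s - T) := exp_neg_log_two ▸ exp_le_exp.2 (by linarith [hs.1])
    exact min_eq_right (by linarith)
  rw [intervalIntegral.integral_congr hleft, intervalIntegral.integral_congr hright,
    intervalIntegral.integral_sub intervalIntegrable_const
      ((by fun_prop : Continuous fun s => exp (s - T)).intervalIntegrable _ _),
    intervalIntegral.integral_comp_sub_right (fun s => exp s), integral_exp]
  simp [exp_neg_log_two]
  ring

/-- The bang-bang control, switching from `0` to `-1/2` at time `T - log 2`. -/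
def optimalControl (T : ℝ) (s : ℝ) : ℝ := if 1 / 2 < exp (s - T) then -1 / 2 else 0

lemma optimalControl_mem_Uc (T : ℝ) : optimalControl T ∈ Uc := by
  refine ⟨Measurable.ite (measurableSet_lt measurable_const (by fun_prop))
    measurable_const measurable_const, fun s => ?_⟩
  unfold optimalControl
  split_ifs <;> norm_num

lemma isLeast_Jc
    (hX : ∀ u ∈ Uc, ∀ b t : ℝ, X u b t = b + ∫ s in (0:ℝ)..t, (2 * u s - X u b s))
    (hT : log 2 ≤ T) (b : ℝ) :
    IsLeast {r : ℝ | ∃ u ∈ Uc, r = Jc X u b T} (b * exp (-T) - b + (log 2 - 1) / 2) := by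
  have hT0 : 0 ≤ T := (log_pos one_lt_two).le.trans hT
  rw [← integral_min_zero_half_sub_exp hT]
  refine ⟨⟨optimalControl T, optimalControl_mem_Uc T, ?_⟩, ?_⟩
  · rw [Jc_eq_integral (hX _ (optimalControl_mem_Uc T) b) (optimalControl_mem_Uc T) hT0]
    simp only [optimalControl, two_mul_mul_add_abs_ite]
  · rintro r ⟨u, hu, rfl⟩
    rw [Jc_eq_integral (hX u hu b) hu hT0]
    gcongr
    refine intervalIntegral.integral_mono_on hT0
      ((by fun_prop : Continuous fun s => min 0 (1 / 2 - exp (s - T))).intervalIntegrable _ _)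
      (intervalIntegrable_exp_mul_add_abs hu T 0 T) fun s _ => ?_
    exact min_le_two_mul_mul_add_abs (exp_pos _).le (abs_le_half_of_mem_Uc hu s)

lemma Jc_ge_integral_abs_sub_one
    (hXu : ∀ t, X u b t = b + ∫ s in (0:ℝ)..t, (2 * u s - X u b s)) (hu : u ∈ Uc)
    (hT : 0 ≤ T) :
    b * exp (-T) - b + (∫ s in (0:ℝ)..T, |u s|) - 1 ≤ Jc X u b T := by
  have hexp_int : IntervalIntegrable (fun s => exp (s - T)) volume 0 T :=
    (by fun_prop : Continuous fun s => exp (s - T)).intervalIntegrable _ _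
  have hmono : ∫ s in (0:ℝ)..T, (|u s| - exp (s - T))
      ≤ ∫ s in (0:ℝ)..T, (2 * exp (s - T) * u s + |u s|) := by
    refine intervalIntegral.integral_mono_on hT
      ((intervalIntegrable_of_mem_Uc hu 0 T).abs.sub hexp_int)
      (intervalIntegrable_exp_mul_add_abs hu T 0 T) fun s _ => ?_
    nlinarith [neg_abs_le (u s), abs_le_half_of_mem_Uc hu s, exp_pos (s - T)]
  rw [intervalIntegral.integral_sub (intervalIntegrable_of_mem_Uc hu 0 T).abs hexp_int,
    intervalIntegral.integral_comp_sub_right (fun s => exp s), integral_exp] at hmono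
  rw [Jc_eq_integral hXu hu hT]
  simp only [zero_sub, sub_self, exp_zero] at hmono
  linarith [exp_pos (-T)]

lemma Jc_ge_neg_integral_abs
    (hXu : ∀ t, X u b t = b + ∫ s in (0:ℝ)..t, (2 * u s - X u b s)) (hu : u ∈ Uc)
    (hT : log 2 ≤ T) :
    b * exp (-T) - b - ∫ s in (T - log 2)..T, |u s| ≤ Jc X u b T := by
  have hlog : 0 < log 2 := log_pos one_lt_two
  have hint := intervalIntegrable_exp_mul_add_abs hu T
  have hleft : 0 ≤ ∫ s in (0:ℝ)..T - log 2, (2 * exp (s - T) * u s + |u s|) := by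
    refine intervalIntegral.integral_nonneg (by linarith) fun s hs => ?_
    have : exp (s - T) ≤ 1 / 2 := exp_neg_log_two ▸ exp_le_exp.2 (by linarith [hs.2])
    linarith [mul_le_mul_of_nonneg_left (neg_abs_le (u s)) (exp_pos (s - T)).le,
      mul_le_mul_of_nonneg_right this (abs_nonneg (u s))]
  have hright : -∫ s in (T - log 2)..T, |u s|
      ≤ ∫ s in (T - log 2)..T, (2 * exp (s - T) * u s + |u s|) := by
    rw [← intervalIntegral.integral_neg]
    refine intervalIntegral.integral_mono_on (by linarith)
      (intervalIntegrable_of_mem_Uc hu _ _).abs.neg (hint _ _) fun s hs => ?_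
    have : exp (s - T) ≤ 1 := exp_le_one_iff.2 (by linarith [hs.2])
    linarith [mul_le_mul_of_nonneg_left (neg_abs_le (u s)) (exp_pos (s - T)).le,
      mul_le_mul_of_nonneg_right this (abs_nonneg (u s))]
  rw [Jc_eq_integral hXu hu (hlog.le.trans hT),
    ← intervalIntegral.integral_add_adjacent_intervals (hint 0 (T - log 2)) (hint _ T)]
  linarith

lemma le_liminf_Jc (hXu : ∀ t, X u b t = b + ∫ s in (0:ℝ)..t, (2 * u s - X u b s))
    (hu : u ∈ Uc) :
    ((-b : ℝ) : EReal) ≤ liminf (fun T => (Jc X u b T : EReal)) atTop := by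
  set A : ℝ → ℝ := fun T => ∫ s in (0:ℝ)..T, |u s|
  have hA : Monotone A := fun T₁ T₂ h => by
    have := intervalIntegral.integral_interval_sub_left
      (intervalIntegrable_of_mem_Uc hu 0 T₂).abs (intervalIntegrable_of_mem_Uc hu 0 T₁).abs
    linarith [intervalIntegral.integral_nonneg (μ := volume) h fun s _ => abs_nonneg (u s)]
  by_cases hbdd : BddAbove (range A)
  · have hAlim := tendsto_atTop_ciSup hA hbdd
    have htail : Tendsto (fun T => A T - A (T - log 2)) atTop (𝓝 0) := by
      simpa [sub_eq_add_neg] using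
        hAlim.sub (hAlim.comp (tendsto_atTop_add_const_right _ (-log 2) tendsto_id))
    refine EReal.coe_le_liminf_of_tendsto
      (g := fun T => b * exp (-T) - b - (A T - A (T - log 2)))
      (by simpa using ((tendsto_exp_neg_atTop_nhds_zero.const_mul b).sub_const b).sub htail) ?_
    filter_upwards [eventually_ge_atTop (log 2)] with T hT
    rw [intervalIntegral.integral_interval_sub_left (intervalIntegrable_of_mem_Uc hu 0 T).abs
      (intervalIntegrable_of_mem_Uc hu 0 _).abs]
    exact Jc_ge_neg_integral_abs hXu hu hT
  · have hAtop := tendsto_atTop_atTop_of_monotone hA fun M =>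
      let ⟨_, ⟨T, hT⟩, hM⟩ := not_bddAbove_iff.1 hbdd M; ⟨T, hT ▸ hM.le⟩
    refine le_liminf_of_le (h := ?_)
    filter_upwards [hAtop.eventually_ge_atTop (|b| + 1), eventually_ge_atTop 0] with T hAT hT
    have hbexp : -|b| ≤ b * exp (-T) := by
      nlinarith [neg_abs_le b, le_abs_self b, exp_pos (-T), exp_le_one_iff.2 (neg_nonpos.2 hT)]
    exact EReal.coe_le_coe_iff.2 (by linarith [Jc_ge_integral_abs_sub_one hXu hu hT])

lemma sInf_liminf_Jc
    (hX : ∀ u ∈ Uc, ∀ b t : ℝ, X u b t = b + ∫ s in (0:ℝ)..t, (2 * u s - X u b s)) (b : ℝ) :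
    sInf {e : EReal | ∃ u ∈ Uc, e = liminf (fun T => (Jc X u b T : EReal)) atTop}
      = ((-b : ℝ) : EReal) := by
  have h0 : (fun _ : ℝ => (0 : ℝ)) ∈ Uc := ⟨measurable_const, fun _ => by norm_num⟩
  have hJ0 : Tendsto (fun T => Jc X (fun _ => 0) b T) atTop (𝓝 (-b)) := by
    refine Tendsto.congr' ?_ (by simpa using
      (tendsto_exp_neg_atTop_nhds_zero.const_mul b).sub_const b)
    filter_upwards [eventually_ge_atTop 0] with T hT
    simp [Jc_eq_integral (hX _ h0 b) h0 hT]
  refine le_antisymm (sInf_le ⟨_, h0, (EReal.tendsto_coe.2 hJ0).liminf_eq.symm⟩) ?_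
  exact le_sInf fun _ ⟨u, hu, he⟩ => he ▸ le_liminf_Jc (hX u hu b) hu

end ScalarExample

theorem example_Vall_lt_Vinf (X : (ℝ → ℝ) → ℝ → ℝ → ℝ)
    (hX : ∀ u ∈ Uc, ∀ b t : ℝ, X u b t = b + ∫ s in (0:ℝ)..t, (2 * u s - X u b s)) :
    (∀ T : ℝ, 1 < T → ∀ b : ℝ,
      sInf {r : ℝ | ∃ u ∈ Uc, r = Jc X u b T}
        = b * Real.exp (-T) - 1/2 - b + Real.log 2 / 2) ∧
    (∀ b : ℝ,
      Tendsto (fun T : ℝ => sInf {r : ℝ | ∃ u ∈ Uc, r = Jc X u b T}) atTop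
        (𝓝 (-b + (Real.log 2 - 1) / 2))) ∧
    ∀ b : ℝ,
      sInf {e : EReal | ∃ u ∈ Uc,
          e = Filter.liminf (fun T : ℝ => ((Jc X u b T : ℝ) : EReal)) Filter.atTop}
        = ((-b : ℝ) : EReal) ∧
      -b + (Real.log 2 - 1) / 2 < -b := by
  have hlog : log 2 < 1 := by linarith [log_two_lt_d9]
  have hVT (b : ℝ) {T : ℝ} (hT : 1 < T) :
      sInf {r : ℝ | ∃ u ∈ Uc, r = Jc X u b T} = b * exp (-T) - b + (log 2 - 1) / 2 :=
    (isLeast_Jc hX (by linarith) b).csInf_eq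
  refine ⟨fun T hT b => by rw [hVT b hT]; ring, fun b => ?_,
    fun b => ⟨sInf_liminf_Jc hX b, by linarith⟩⟩
  refine Tendsto.congr' ((eventually_gt_atTop 1).mono fun T hT => (hVT b hT).symm) ?_
  simpa using ((tendsto_exp_neg_atTop_nhds_zero.const_mul b).sub_const b).add_const
    ((log 2 - 1) / 2)

end
end
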